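/- arXiv:1607.07035 — 10 statements merged into one kernel-verified Lean document; each statement's English description precedes it below -/
import Mathlib

section
/- Let k be a commutative ring and A a commutative k-algebra that is faithfully flat as a k-module. Then the Amitsur sequence 0 → k → A → A ⊗[k] A → A ⊗[k] A ⊗[k] A is exact; explicitly: (i) the map algebraMap k A is injective; (ii) an element x ∈ A satisfies x ⊗ 1 = 1 ⊗ x in A ⊗[k] A if and only if x lies in the range of algebraMap k A; (iii) an element x ∈ A ⊗[k] A satisfies ∂₁(x) − ∂₂(x) + ∂₃(x) = 0 if and only if there exists a ∈ A with x = 1 ⊗ a − a ⊗ 1. (This expresses that the additive Amitsur cohomology H¹(A/k, 𝔾ₐ) vanishes.) -/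
open TensorProduct

/-- `∂₁ : A ⊗[k] A → A ⊗[k] A ⊗[k] A`, `a ⊗ b ↦ 1 ⊗ a ⊗ b`. -/
noncomputable def amitsurP1 (k A : Type*) [CommRing k] [CommRing A] [Algebra k A] :
    A ⊗[k] A →ₐ[k] A ⊗[k] (A ⊗[k] A) :=
  Algebra.TensorProduct.includeRight

/-- `∂₂ : A ⊗[k] A → A ⊗[k] A ⊗[k] A`, `a ⊗ b ↦ a ⊗ 1 ⊗ b`. -/
noncomputable def amitsurP2 (k A : Type*) [CommRing k] [CommRing A] [Algebra k A] :
    A ⊗[k] A →ₐ[k] A ⊗[k] (A ⊗[k] A) :=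
  Algebra.TensorProduct.map (AlgHom.id k A) Algebra.TensorProduct.includeRight

/-- `∂₃ : A ⊗[k] A → A ⊗[k] A ⊗[k] A`, `a ⊗ b ↦ a ⊗ b ⊗ 1`. -/
noncomputable def amitsurP3 (k A : Type*) [CommRing k] [CommRing A] [Algebra k A] :
    A ⊗[k] A →ₐ[k] A ⊗[k] (A ⊗[k] A) :=
  Algebra.TensorProduct.map (AlgHom.id k A) Algebra.TensorProduct.includeLeft

section
variable (k A : Type*) [CommRing k] [CommRing A] [Algebra k A]

noncomputable def amF : k →ₗ[k] A := Algebra.linearMap k A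

noncomputable def amG : A →ₗ[k] A ⊗[k] A :=
  TensorProduct.mk k A A 1 - (TensorProduct.mk k A A).flip 1

@[simp] lemma amG_apply (x : A) : amG k A x = 1 ⊗ₜ[k] x - x ⊗ₜ[k] 1 := rfl

noncomputable def amD : A ⊗[k] A →ₗ[k] A ⊗[k] (A ⊗[k] A) :=
  (amitsurP1 k A).toLinearMap - (amitsurP2 k A).toLinearMap + (amitsurP3 k A).toLinearMap

@[simp] lemma amD_tmul (a b : A) :
    amD k A (a ⊗ₜ[k] b) = 1 ⊗ₜ[k] (a ⊗ₜ[k] b) - a ⊗ₜ[k] ((1:A) ⊗ₜ[k] b) + a ⊗ₜ[k] (b ⊗ₜ[k] (1:A)) := by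
  simp [amD, amitsurP1, amitsurP2, amitsurP3]

noncomputable def amS1 : A ⊗[k] A →ₗ[k] A ⊗[k] k :=
  (TensorProduct.rid k A).symm.toLinearMap ∘ₗ LinearMap.mul' k A

noncomputable def amS2 : A ⊗[k] (A ⊗[k] A) →ₗ[k] A ⊗[k] A :=
  (LinearMap.mul' k A).rTensor A ∘ₗ (TensorProduct.assoc k A A A).symm.toLinearMap

noncomputable def amS3 : A ⊗[k] (A ⊗[k] (A ⊗[k] A)) →ₗ[k] A ⊗[k] (A ⊗[k] A) :=
  (LinearMap.mul' k A).rTensor (A ⊗[k] A) ∘ₗ (TensorProduct.assoc k A A (A ⊗[k] A)).symm.toLinearMap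

@[simp] lemma amS1_tmul (a b : A) : amS1 k A (a ⊗ₜ[k] b) = (a * b) ⊗ₜ[k] (1 : k) := by
  simp [amS1, TensorProduct.rid_symm_apply]

@[simp] lemma amS2_tmul (a b c : A) : amS2 k A (a ⊗ₜ[k] (b ⊗ₜ[k] c)) = (a * b) ⊗ₜ[k] c := by
  simp [amS2, TensorProduct.assoc_symm_tmul]

@[simp] lemma amS3_tmul (a b : A) (t : A ⊗[k] A) :
    amS3 k A (a ⊗ₜ[k] (b ⊗ₜ[k] t)) = (a * b) ⊗ₜ[k] t := by
  simp [amS3, TensorProduct.assoc_symm_tmul]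

lemma amH1 : (amF k A).lTensor A ∘ₗ amS1 k A + amS2 k A ∘ₗ (amG k A).lTensor A = LinearMap.id := by
  apply TensorProduct.ext'
  intro a b
  simp only [LinearMap.add_apply, LinearMap.comp_apply, amS1_tmul, LinearMap.lTensor_tmul,
    amG_apply, TensorProduct.tmul_sub, map_sub, amS2_tmul, LinearMap.id_apply, amF,
    Algebra.linearMap_apply, map_one, mul_one]
  abel

lemma amH2 : (amG k A).lTensor A ∘ₗ amS2 k A + amS3 k A ∘ₗ (amD k A).lTensor A = LinearMap.id := by
  apply TensorProduct.ext'
  intro a x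
  induction x using TensorProduct.induction_on with
  | zero => simp
  | tmul b c =>
    simp only [LinearMap.add_apply, LinearMap.comp_apply, amS2_tmul, LinearMap.lTensor_tmul,
      amG_apply, amD_tmul, TensorProduct.tmul_sub, TensorProduct.tmul_add, map_sub, map_add,
      amS3_tmul, LinearMap.id_apply, mul_one, one_mul]
    abel
  | add x y hx hy =>
    simp only [TensorProduct.tmul_add, map_add, LinearMap.add_apply, LinearMap.comp_apply,
      LinearMap.id_apply] at hx hy ⊢
    rw [show ((amG k A).lTensor A) (amS2 k A (a ⊗ₜ[k] x)) + amS3 k A (((amD k A).lTensor A) (a ⊗ₜ[k] x)) +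
      (((amG k A).lTensor A) (amS2 k A (a ⊗ₜ[k] y)) + amS3 k A (((amD k A).lTensor A) (a ⊗ₜ[k] y))) = a ⊗ₜ[k] x + a ⊗ₜ[k] y from by rw [hx, hy]]
lemma amGF : amG k A ∘ₗ amF k A = 0 := by
  ext
  simp [amF, Algebra.algebraMap_eq_smul_one, TensorProduct.tmul_smul, TensorProduct.smul_tmul]

lemma amDG : amD k A ∘ₗ amG k A = 0 := by
  ext x
  simp [TensorProduct.sub_tmul, TensorProduct.tmul_sub]

lemma amRetr : amS1 k A ∘ₗ (amF k A).lTensor A = LinearMap.id := by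
  apply TensorProduct.ext'
  intro a c
  simp only [LinearMap.comp_apply, LinearMap.lTensor_tmul, amS1_tmul, amF,
    Algebra.linearMap_apply, LinearMap.id_apply, Algebra.algebraMap_eq_smul_one,
    Algebra.mul_smul_comm, mul_one]
  rw [show (c : k) = c • (1 : k) by simp, TensorProduct.tmul_smul, TensorProduct.smul_tmul']
  simp [smul_smul]

lemma amE0T : Function.Exact ((0 : k →ₗ[k] k).lTensor A) ((amF k A).lTensor A) := by
  intro y
  constructor
  · intro h
    have h1 := LinearMap.congr_fun (amRetr k A) y
    simp only [LinearMap.comp_apply, LinearMap.id_apply] at h1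
    have hy : y = 0 := by rw [← h1, h, (amS1 k A).map_zero]
    exact ⟨0, by simp [hy]⟩
  · rintro ⟨x, rfl⟩
    simp [LinearMap.lTensor_zero]

lemma amE1T : Function.Exact ((amF k A).lTensor A) ((amG k A).lTensor A) := by
  intro y
  constructor
  · intro h
    refine ⟨amS1 k A y, ?_⟩
    have h1 := LinearMap.congr_fun (amH1 k A) y
    simp only [LinearMap.add_apply, LinearMap.comp_apply, LinearMap.id_apply] at h1
    rw [h, map_zero, add_zero] at h1
    exact h1
  · rintro ⟨x, rfl⟩
    rw [← LinearMap.comp_apply, ← LinearMap.lTensor_comp, amGF, LinearMap.lTensor_zero,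
      LinearMap.zero_apply]

lemma amE2T : Function.Exact ((amG k A).lTensor A) ((amD k A).lTensor A) := by
  intro y
  constructor
  · intro h
    refine ⟨amS2 k A y, ?_⟩
    have h1 := LinearMap.congr_fun (amH2 k A) y
    simp only [LinearMap.add_apply, LinearMap.comp_apply, LinearMap.id_apply] at h1
    rw [h, (amS3 k A).map_zero, add_zero] at h1
    exact h1
  · rintro ⟨x, rfl⟩
    rw [← LinearMap.comp_apply, ← LinearMap.lTensor_comp, amDG, LinearMap.lTensor_zero,
      LinearMap.zero_apply]
end

/-- The Amitsur sequence `0 → k → A → A ⊗[k] A → A ⊗[k] A ⊗[k] A` is exact for a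
faithfully flat algebra `A` over `k`; equivalently `H¹(A/k, 𝔾ₐ)` vanishes. -/
theorem amitsur_exact_additive (k A : Type*) [CommRing k] [CommRing A] [Algebra k A]
    [Module.FaithfullyFlat k A] :
    Function.Injective (algebraMap k A) ∧
    (∀ x : A, x ⊗ₜ[k] (1 : A) = (1 : A) ⊗ₜ[k] x ↔ x ∈ (algebraMap k A).range) ∧
    (∀ x : A ⊗[k] A,
      amitsurP1 k A x - amitsurP2 k A x + amitsurP3 k A x = 0 ↔
        ∃ a : A, x = (1 : A) ⊗ₜ[k] a - a ⊗ₜ[k] (1 : A)) := by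
  have E0 : Function.Exact (0 : k →ₗ[k] k) (amF k A) :=
    Module.FaithfullyFlat.lTensor_reflects_exact k A _ _ (amE0T k A)
  have E1 : Function.Exact (amF k A) (amG k A) :=
    Module.FaithfullyFlat.lTensor_reflects_exact k A _ _ (amE1T k A)
  have E2 : Function.Exact (amG k A) (amD k A) :=
    Module.FaithfullyFlat.lTensor_reflects_exact k A _ _ (amE2T k A)
  refine ⟨?_, ?_, ?_⟩
  · intro a b h
    have h0 : amF k A (a - b) = 0 := by
      simp only [amF, Algebra.linearMap_apply, map_sub, h, sub_self]
    obtain ⟨x, hx⟩ := (E0 _).mp h0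
    have : a - b = 0 := by simpa using hx.symm
    exact sub_eq_zero.mp this
  · intro x
    have hE := E1 x
    rw [amG_apply, sub_eq_zero] at hE
    constructor
    · intro hx
      obtain ⟨c, hc⟩ := hE.mp hx.symm
      exact RingHom.mem_range.mpr ⟨c, hc⟩
    · rintro ⟨c, hc⟩
      exact (hE.mpr ⟨c, hc⟩).symm
  · intro x
    have hE := E2 x
    have hD : amD k A x = amitsurP1 k A x - amitsurP2 k A x + amitsurP3 k A x := rfl
    rw [hD] at hE
    constructor
    · intro hx
      obtain ⟨a, ha⟩ := hE.mp hx
      exact ⟨a, by rw [← ha, amG_apply]⟩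
    · rintro ⟨a, rfl⟩
      exact hE.mpr ⟨a, rfl⟩
end

section
/- Let k be a field and A a commutative k-algebra. If χ ∈ (A ⊗[k] A)ˣ is a unit satisfying the multiplicative cocycle condition ∂₂(χ) = ∂₁(χ) · ∂₃(χ) in A ⊗[k] A ⊗[k] A, then there exists a unit α ∈ Aˣ such that χ = α⁻¹ ⊗ α. (This expresses that the Amitsur cohomology set H¹(A/k, 𝔾ₘ) is trivial for every algebra A over a field k.) -/
/-!
Slicing the cocycle identity `∂₂χ = ∂₁χ · ∂₃χ` by a linear functional `f` on the first tensor
factor shows that `u = (f ⊗ id) χ` satisfies `1 ⊗ u = χ · (u ⊗ 1)`; likewise `v = (f' ⊗ id) χ⁻¹`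
satisfies `1 ⊗ v = χ⁻¹ · (v ⊗ 1)`. Multiplying, `1 ⊗ uv = uv ⊗ 1`, and over a field this forces
`uv ∈ k`. Since functionals separate `A ⊗[k] A`, some product `uv` is nonzero, hence `u` is a unit
and `χ = (1 ⊗ u)(u⁻¹ ⊗ 1) = u⁻¹ ⊗ u`.
-/

open TensorProduct

section Slice

variable {k V M : Type*} [CommRing k] [AddCommGroup V] [Module k V] [AddCommGroup M] [Module k M]

noncomputable def sliceLeft (f : Module.Dual k V) : V ⊗[k] M →ₗ[k] M :=
  TensorProduct.lid k M ∘ₗ f.rTensor M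

@[simp]
lemma sliceLeft_tmul (f : Module.Dual k V) (v : V) (m : M) :
    sliceLeft f (v ⊗ₜ[k] m) = f v • m := by
  simp [sliceLeft]

end Slice

lemma eq_zero_of_forall_sliceLeft_eq_zero {k V M : Type*} [Field k] [AddCommGroup V] [Module k V]
    [AddCommGroup M] [Module k M] (w : V ⊗[k] M) (h : ∀ f : Module.Dual k V, sliceLeft f w = 0) :
    w = 0 := by
  classical
  let ℬ := Module.Basis.ofVectorSpace k V
  refine (equivFinsuppOfBasisLeft ℬ).map_eq_zero_iff.mp (Finsupp.ext fun i => ?_)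
  simpa [equivFinsuppOfBasisLeft_apply, sliceLeft] using h (ℬ.coord i)

section Amitsur

variable {k A : Type*} [CommRing k] [CommRing A] [Algebra k A]

lemma sliceLeft_one_tmul_mul (f : Module.Dual k A) (c : A) (w : A ⊗[k] A) :
    sliceLeft f ((1 ⊗ₜ[k] c) * w) = c * sliceLeft f w := by
  induction w with
  | zero => simp
  | add x y hx hy => simp only [mul_add, map_add, hx, hy]
  | tmul a b => simp [Algebra.TensorProduct.tmul_mul_tmul, mul_comm c b]

lemma sliceLeft_amitsurP2 (f : Module.Dual k A) (x : A ⊗[k] A) :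
    sliceLeft f (amitsurP2 k A x) = 1 ⊗ₜ[k] sliceLeft f x := by
  induction x with
  | zero => simp
  | add x y hx hy => simp only [map_add, hx, hy, tmul_add]
  | tmul a b => simp [amitsurP2, tmul_smul]

lemma sliceLeft_amitsurP1_mul_amitsurP3 (f : Module.Dual k A) (x y : A ⊗[k] A) :
    sliceLeft f (amitsurP1 k A x * amitsurP3 k A y) = x * (sliceLeft f y ⊗ₜ[k] 1) := by
  induction x with
  | zero => simp
  | add x x' hx hx' => simp only [map_add, add_mul, hx, hx']
  | tmul a b =>
    induction y with
    | zero => simp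
    | add y y' hy hy' => simp only [map_add, mul_add, hy, hy', add_tmul]
    | tmul a' b' =>
      simp [amitsurP1, amitsurP3, smul_tmul']

variable (k A) in
def IsAmitsurCocycle (χ : A ⊗[k] A) : Prop :=
  amitsurP2 k A χ = amitsurP1 k A χ * amitsurP3 k A χ

lemma IsAmitsurCocycle.units_inv {χ : (A ⊗[k] A)ˣ} (hχ : IsAmitsurCocycle k A χ) :
    IsAmitsurCocycle k A ↑χ⁻¹ := by
  let U (i : A ⊗[k] A →ₐ[k] A ⊗[k] (A ⊗[k] A)) := Units.map i.toMonoidHom χ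
  have h : U (amitsurP2 k A) = U (amitsurP1 k A) * U (amitsurP3 k A) := Units.ext hχ
  have h_inv := congrArg (fun u => ((u⁻¹ : (A ⊗[k] (A ⊗[k] A))ˣ) : A ⊗[k] (A ⊗[k] A))) h
  simpa [U, IsAmitsurCocycle, mul_comm] using h_inv

lemma IsAmitsurCocycle.one_tmul_sliceLeft {χ : A ⊗[k] A} (hχ : IsAmitsurCocycle k A χ)
    (f : Module.Dual k A) : 1 ⊗ₜ[k] sliceLeft f χ = χ * (sliceLeft f χ ⊗ₜ[k] 1) := by
  simpa [sliceLeft_amitsurP2, sliceLeft_amitsurP1_mul_amitsurP3] using congrArg (sliceLeft f) hχ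

lemma one_tmul_mul_eq_mul_tmul_one {c c' : A ⊗[k] A} (hcc' : c * c' = 1) {u v : A}
    (hu : 1 ⊗ₜ[k] u = c * (u ⊗ₜ[k] 1)) (hv : 1 ⊗ₜ[k] v = c' * (v ⊗ₜ[k] 1)) :
    1 ⊗ₜ[k] (u * v) = (u * v) ⊗ₜ[k] 1 := by
  calc 1 ⊗ₜ[k] (u * v) = (1 ⊗ₜ[k] u) * (1 ⊗ₜ[k] v) := by simp
    _ = (c * c') * ((u ⊗ₜ[k] 1) * (v ⊗ₜ[k] 1)) := by rw [hu, hv]; ring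
    _ = (u * v) ⊗ₜ[k] 1 := by simp [hcc']

lemma eq_inv_tmul_of_one_tmul_eq_mul {c : A ⊗[k] A} (α : Aˣ)
    (h : 1 ⊗ₜ[k] (α : A) = c * ((α : A) ⊗ₜ[k] 1)) : c = ((α⁻¹ : Aˣ) : A) ⊗ₜ[k] (α : A) := by
  calc c = c * ((α : A) ⊗ₜ[k] 1) * (((α⁻¹ : Aˣ) : A) ⊗ₜ[k] 1) := by
        rw [mul_assoc, Algebra.TensorProduct.tmul_mul_tmul, Units.mul_inv, mul_one,
          ← Algebra.TensorProduct.one_def, mul_one]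
    _ = ((α⁻¹ : Aˣ) : A) ⊗ₜ[k] (α : A) := by
        rw [← h, Algebra.TensorProduct.tmul_mul_tmul, one_mul, mul_one]

end Amitsur

section Field

variable {k A : Type*} [Field k] [CommRing A] [Algebra k A]

lemma exists_algebraMap_eq_of_one_tmul_eq_tmul_one {a : A} (h : 1 ⊗ₜ[k] a = a ⊗ₜ[k] 1) :
    ∃ s : k, algebraMap k A s = a := by
  rcases subsingleton_or_nontrivial A with _ | _
  · exact ⟨0, Subsingleton.elim _ _⟩
  obtain ⟨g, hg⟩ := Module.Projective.exists_dual_eq_one k (one_ne_zero : (1 : A) ≠ 0)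
  refine ⟨g a, ?_⟩
  simpa [hg, Algebra.algebraMap_eq_smul_one] using (congrArg (sliceLeft g) h).symm

lemma exists_sliceLeft_mul_sliceLeft_inv_ne_zero [Nontrivial A] (χ : (A ⊗[k] A)ˣ) :
    ∃ f f' : Module.Dual k A, sliceLeft f (χ : A ⊗[k] A) * sliceLeft f' ↑χ⁻¹ ≠ 0 := by
  by_contra! h
  have h_slice (f : Module.Dual k A) : sliceLeft f (χ : A ⊗[k] A) = 0 := by
    have h_mul : (1 ⊗ₜ[k] sliceLeft f (χ : A ⊗[k] A)) * (↑χ⁻¹ : A ⊗[k] A) = 0 :=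
      eq_zero_of_forall_sliceLeft_eq_zero _ fun f' => by rw [sliceLeft_one_tmul_mul, h]
    simpa only [mul_assoc, Units.inv_mul, mul_one, zero_mul,
      Module.FaithfullyFlat.one_tmul_eq_zero_iff] using congrArg (· * (χ : A ⊗[k] A)) h_mul
  have : Nontrivial (A ⊗[k] A) :=
    Algebra.TensorProduct.nontrivial_of_algebraMap_injective_of_flat_left k A A
      (algebraMap k A).injective
  exact χ.ne_zero (eq_zero_of_forall_sliceLeft_eq_zero _ h_slice)

end Field

/-- `H¹(A/k, 𝔾ₘ)` is trivial for every algebra `A` over a field `k`: every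
multiplicative 1-cocycle `χ ∈ (A ⊗[k] A)ˣ` is of the form `α⁻¹ ⊗ α`. -/
theorem amitsur_h1_Gm_trivial (k A : Type*) [Field k] [CommRing A] [Algebra k A]
    (χ : (A ⊗[k] A)ˣ)
    (hcoc : amitsurP2 k A χ.val = amitsurP1 k A χ.val * amitsurP3 k A χ.val) :
    ∃ α : Aˣ, χ.val = ((α⁻¹ : Aˣ) : A) ⊗ₜ[k] ((α : Aˣ) : A) := by
  rcases subsingleton_or_nontrivial A with _ | _
  · exact ⟨1, Subsingleton.elim _ _⟩
  have hχ : IsAmitsurCocycle k A χ := hcoc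
  obtain ⟨f, f', h_ne⟩ := exists_sliceLeft_mul_sliceLeft_inv_ne_zero χ
  obtain ⟨s, hs⟩ := exists_algebraMap_eq_of_one_tmul_eq_tmul_one <|
    one_tmul_mul_eq_mul_tmul_one χ.mul_inv (hχ.one_tmul_sliceLeft f)
      (hχ.units_inv.one_tmul_sliceLeft f')
  have h_unit : IsUnit (sliceLeft f (χ : A ⊗[k] A)) := by
    refine isUnit_of_mul_isUnit_left (hs ▸ (IsUnit.mk0 s ?_).map (algebraMap k A))
    rintro rfl
    exact h_ne (by simpa using hs.symm)
  exact ⟨h_unit.unit, eq_inv_tmul_of_one_tmul_eq_mul _ (hχ.one_tmul_sliceLeft f)⟩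
end

section
/- Let k be a σ-field and A a k-σ-algebra. Suppose χ ∈ (A ⊗[k] A)ˣ is a unit satisfying χ² = 1, τ(χ) = χ, and the cocycle condition ∂₂(χ) = ∂₁(χ) · ∂₃(χ). Then there exist a unit α ∈ Aˣ and elements a, b ∈ k such that χ = α⁻¹ ⊗ α, α² = algebraMap k A (a), and σ_A(α) = algebraMap k A (b) · α. (This is the surjectivity part of the computation of H¹_σ(A/k, G) for the σ-algebraic subgroup G of 𝔾ₘ given by G(R) = {g ∈ Rˣ | g² = 1, σ(g) = g}.) -/
/-!
Slicing the cocycle identity `∂₂χ = ∂₁χ · ∂₃χ` with a linear form `f` on the last factor shows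
that every slice `p = (id ⊗ f) χ` satisfies `p ⊗ 1 = χ (1 ⊗ p)`. As `χ² = 1`, a product `x` of two
slices satisfies `x ⊗ 1 = 1 ⊗ x`, so it lies in `k`; since `χ² ≠ 0` some such product is nonzero,
which makes a slice `p` a unit with `χ = p ⊗ p⁻¹`. For `α = p⁻¹` the conditions `χ² = 1` and
`τ χ = χ` say that `u⁻¹ ⊗ u = 1` for `u = α²` and `u = σ(α) α⁻¹`, which again forces `u ∈ k`.
-/

open TensorProduct

namespace TensorProduct

variable {R M N : Type*} [CommRing R] [AddCommGroup M] [Module R M] [AddCommGroup N] [Module R N]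

noncomputable def sliceRight (f : Module.Dual R N) : M ⊗[R] N →ₗ[R] M :=
  (TensorProduct.rid R M).toLinearMap ∘ₗ f.lTensor M

lemma sliceRight_apply (f : Module.Dual R N) (x : M ⊗[R] N) :
    sliceRight f x = TensorProduct.rid R M (f.lTensor M x) :=
  rfl

@[simp]
lemma sliceRight_tmul (f : Module.Dual R N) (m : M) (n : N) :
    sliceRight f (m ⊗ₜ[R] n) = f n • m := by
  simp [sliceRight]

end TensorProduct

open Algebra.TensorProduct

section Amitsur

variable {k A : Type*} [CommRing k] [CommRing A] [Algebra k A]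

lemma exists_sliceRight_mul_sliceRight_ne_zero [Module.Free k A] {s t : A ⊗[k] A}
    (hst : s * t ≠ 0) : ∃ f g : Module.Dual k A, sliceRight f s * sliceRight g t ≠ 0 := by
  classical
  by_contra! h
  apply hst
  -- the slices along the coordinate forms of a basis are the coefficients of `s` and `t`
  let 𝒞 := Module.Free.chooseBasis k A
  let e := equivFinsuppOfBasisRight (M := A) 𝒞
  rw [← e.symm_apply_apply s, ← e.symm_apply_apply t, equivFinsuppOfBasisRight_symm_apply,
    equivFinsuppOfBasisRight_symm_apply, Finsupp.sum_mul]
  refine Finset.sum_eq_zero fun i _ => ?_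
  dsimp only
  rw [Finsupp.mul_sum]
  refine Finset.sum_eq_zero fun j _ => ?_
  dsimp only
  rw [tmul_mul_tmul, equivFinsuppOfBasisRight_apply, equivFinsuppOfBasisRight_apply,
    ← sliceRight_apply, ← sliceRight_apply, h, zero_tmul]

lemma lTensor_sliceRight_amitsurP2 (f : Module.Dual k A) (u : A ⊗[k] A) :
    (sliceRight f).lTensor A (amitsurP2 k A u) = sliceRight f u ⊗ₜ[k] (1 : A) := by
  induction u using TensorProduct.induction_on with
  | zero => simp
  | tmul a b => simp [amitsurP2, smul_tmul', tmul_smul]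
  | add x y hx hy => rw [map_add, map_add, hx, hy, map_add, add_tmul]

lemma lTensor_sliceRight_amitsurP1_mul_amitsurP3 (f : Module.Dual k A) (u v : A ⊗[k] A) :
    (sliceRight f).lTensor A (amitsurP1 k A u * amitsurP3 k A v) =
      v * ((1 : A) ⊗ₜ[k] sliceRight f u) := by
  induction u using TensorProduct.induction_on with
  | zero => simp
  | add x y hx hy => rw [map_add, add_mul, map_add, hx, hy, map_add, tmul_add, mul_add]
  | tmul a b =>
    induction v using TensorProduct.induction_on with
    | zero => simp
    | add x y hx hy => rw [map_add, mul_add, map_add, hx, hy, add_mul]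
    | tmul c d =>
      simp [amitsurP1, amitsurP3, tmul_smul, mul_comm d a]

lemma sliceRight_tmul_one_of_cocycle {χ : A ⊗[k] A}
    (hcoc : amitsurP2 k A χ = amitsurP1 k A χ * amitsurP3 k A χ) (f : Module.Dual k A) :
    sliceRight f χ ⊗ₜ[k] (1 : A) = χ * ((1 : A) ⊗ₜ[k] sliceRight f χ) := by
  rw [← lTensor_sliceRight_amitsurP2, hcoc, lTensor_sliceRight_amitsurP1_mul_amitsurP3]

end Amitsur

section Descent

variable {k A : Type*} [CommRing k] [CommRing A] [Algebra k A]

lemma mul_tmul_one_eq_one_tmul_mul {χ : A ⊗[k] A} (hχ : χ * χ = 1) {x y : A}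
    (hx : x ⊗ₜ[k] (1 : A) = χ * ((1 : A) ⊗ₜ[k] x))
    (hy : y ⊗ₜ[k] (1 : A) = χ * ((1 : A) ⊗ₜ[k] y)) :
    (x * y) ⊗ₜ[k] (1 : A) = (1 : A) ⊗ₜ[k] (x * y) :=
  calc (x * y) ⊗ₜ[k] (1 : A) = (x ⊗ₜ[k] (1 : A)) * (y ⊗ₜ[k] (1 : A)) := by
        rw [tmul_mul_tmul, mul_one]
    _ = (χ * χ) * ((1 : A) ⊗ₜ[k] x * (1 : A) ⊗ₜ[k] y) := by rw [hx, hy]; ring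
    _ = (1 : A) ⊗ₜ[k] (x * y) := by rw [hχ, one_mul, tmul_mul_tmul, one_mul]

lemma eq_tmul_inv_of_tmul_one_eq {χ : A ⊗[k] A} (u : Aˣ)
    (hu : (u : A) ⊗ₜ[k] (1 : A) = χ * ((1 : A) ⊗ₜ[k] (u : A))) :
    χ = (u : A) ⊗ₜ[k] ((u⁻¹ : Aˣ) : A) :=
  calc χ = χ * ((1 : A) ⊗ₜ[k] (u : A)) * ((1 : A) ⊗ₜ[k] ((u⁻¹ : Aˣ) : A)) := by
        rw [mul_assoc, tmul_mul_tmul, one_mul, Units.mul_inv, ← one_def, mul_one]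
    _ = (u : A) ⊗ₜ[k] ((u⁻¹ : Aˣ) : A) := by rw [← hu, tmul_mul_tmul, one_mul, mul_one]

lemma tmul_one_eq_one_tmul_of_inv_tmul_eq_one (u : Aˣ)
    (hu : ((u⁻¹ : Aˣ) : A) ⊗ₜ[k] (u : A) = 1) :
    (u : A) ⊗ₜ[k] (1 : A) = (1 : A) ⊗ₜ[k] (u : A) :=
  calc (u : A) ⊗ₜ[k] (1 : A) = (u : A) ⊗ₜ[k] (1 : A) * (((u⁻¹ : Aˣ) : A) ⊗ₜ[k] (u : A)) := by
        rw [hu, mul_one]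
    _ = (1 : A) ⊗ₜ[k] (u : A) := by rw [tmul_mul_tmul, Units.mul_inv, one_mul]

end Descent

section Field

variable {k A : Type*} [Field k] [CommRing A] [Algebra k A]

lemma exists_algebraMap_eq_of_tmul_one_eq_one_tmul {x : A}
    (hx : x ⊗ₜ[k] (1 : A) = (1 : A) ⊗ₜ[k] x) : ∃ c : k, x = algebraMap k A c := by
  rcases subsingleton_or_nontrivial A with hA | hA
  · exact ⟨0, Subsingleton.elim _ _⟩
  obtain ⟨h, h1⟩ := Module.Projective.exists_dual_eq_one k (one_ne_zero (α := A))
  refine ⟨h x, ?_⟩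
  simpa [h1, Algebra.algebraMap_eq_smul_one] using congrArg (sliceRight h) hx

lemma exists_algebraMap_eq_of_inv_tmul_eq_one (u : Aˣ)
    (hu : ((u⁻¹ : Aˣ) : A) ⊗ₜ[k] (u : A) = 1) : ∃ c : k, (u : A) = algebraMap k A c :=
  exists_algebraMap_eq_of_tmul_one_eq_one_tmul (tmul_one_eq_one_tmul_of_inv_tmul_eq_one u hu)

lemma exists_unit_eq_inv_tmul_of_cocycle {χ : A ⊗[k] A} (hχ : χ * χ = 1)
    (hcoc : amitsurP2 k A χ = amitsurP1 k A χ * amitsurP3 k A χ) :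
    ∃ α : Aˣ, χ = ((α⁻¹ : Aˣ) : A) ⊗ₜ[k] (α : A) := by
  rcases subsingleton_or_nontrivial (A ⊗[k] A) with h | h
  · exact ⟨1, Subsingleton.elim _ _⟩
  obtain ⟨f, g, hfg⟩ := exists_sliceRight_mul_sliceRight_ne_zero (hχ ▸ one_ne_zero)
  have hp := sliceRight_tmul_one_of_cocycle hcoc f
  obtain ⟨c, hc⟩ := exists_algebraMap_eq_of_tmul_one_eq_one_tmul
    (mul_tmul_one_eq_one_tmul_mul hχ hp (sliceRight_tmul_one_of_cocycle hcoc g))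
  have hc0 : c ≠ 0 := by rintro rfl; exact hfg (by rw [hc, map_zero])
  obtain ⟨u, hu⟩ : IsUnit (sliceRight f χ) :=
    isUnit_of_mul_isUnit_left (hc ▸ (Ne.isUnit hc0).map (algebraMap k A))
  refine ⟨u⁻¹, ?_⟩
  rw [inv_inv]
  exact eq_tmul_inv_of_tmul_one_eq u (hu ▸ hp)

lemma exists_algebraMap_eq_sq_of_inv_tmul_sq_eq_one (α : Aˣ)
    (hα : (((α⁻¹ : Aˣ) : A) ⊗ₜ[k] (α : A)) ^ 2 = 1) : ∃ a : k, (α : A) ^ 2 = algebraMap k A a := by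
  refine exists_algebraMap_eq_of_inv_tmul_eq_one (k := k) (α ^ 2) ?_
  rwa [← inv_pow, Units.val_pow_eq_pow_val, Units.val_pow_eq_pow_val, ← tmul_pow]

lemma exists_algebraMap_mul_of_inv_tmul_fixed (σA : A →+* A) (τ : A ⊗[k] A →+* A ⊗[k] A)
    (hτ : ∀ a b : A, τ (a ⊗ₜ[k] b) = σA a ⊗ₜ[k] σA b) (α : Aˣ)
    (hα : τ (((α⁻¹ : Aˣ) : A) ⊗ₜ[k] (α : A)) = ((α⁻¹ : Aˣ) : A) ⊗ₜ[k] (α : A)) :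
    ∃ b : k, σA α = algebraMap k A b * α := by
  let β : Aˣ := Units.map (σA : A →* A) α * α⁻¹
  have hβ : ((β⁻¹ : Aˣ) : A) ⊗ₜ[k] (β : A) = 1 :=
    calc ((β⁻¹ : Aˣ) : A) ⊗ₜ[k] (β : A)
        = τ (((α⁻¹ : Aˣ) : A) ⊗ₜ[k] (α : A)) * ((α : A) ⊗ₜ[k] ((α⁻¹ : Aˣ) : A)) := by
          simp [β, hτ, mul_comm]
      _ = 1 := by rw [hα, tmul_mul_tmul, Units.inv_mul, Units.mul_inv, one_def]
  obtain ⟨b, hb⟩ := exists_algebraMap_eq_of_inv_tmul_eq_one β hβ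
  exact ⟨b, (Units.mul_inv_eq_iff_eq_mul α).mp (by simpa [β] using hb)⟩

end Field

theorem h1_sigma_mu2_surjective_general (k A : Type*) [Field k] [CommRing A] [Algebra k A]
    (σA : A →+* A)
    (τ : A ⊗[k] A →+* A ⊗[k] A)
    (hτ : ∀ a b : A, τ (a ⊗ₜ[k] b) = σA a ⊗ₜ[k] σA b)
    (χ : (A ⊗[k] A)ˣ)
    (hχsq : χ ^ 2 = 1)
    (hχτ : τ χ.val = χ.val)
    (hcoc : amitsurP2 k A χ.val = amitsurP1 k A χ.val * amitsurP3 k A χ.val) :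
    ∃ (α : Aˣ) (a b : k),
      χ.val = ((α⁻¹ : Aˣ) : A) ⊗ₜ[k] ((α : Aˣ) : A) ∧
      ((α : Aˣ) : A) ^ 2 = algebraMap k A a ∧
      σA ((α : Aˣ) : A) = algebraMap k A b * ((α : Aˣ) : A) := by
  have hχ : χ.val * χ.val = 1 := by rw [← Units.val_mul, ← sq, hχsq, Units.val_one]
  obtain ⟨α, hα⟩ := exists_unit_eq_inv_tmul_of_cocycle hχ hcoc
  rw [hα] at hχ hχτ
  obtain ⟨a, ha⟩ := exists_algebraMap_eq_sq_of_inv_tmul_sq_eq_one α (by rw [sq, hχ])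
  obtain ⟨b, hb⟩ := exists_algebraMap_mul_of_inv_tmul_fixed σA τ hτ α hχτ
  exact ⟨α, a, b, hα, ha, hb⟩

/-- Every 1-cocycle for the σ-algebraic subgroup `G ≤ 𝔾ₘ` with
`G(R) = {g ∈ Rˣ | g² = 1, σ(g) = g}` is of the form `α⁻¹ ⊗ α` with `α² ∈ k`
and `σ(α)/α ∈ k`. -/
theorem h1_sigma_mu2_surjective (k A : Type*) [Field k] [CommRing A] [Algebra k A]
    (σk : k →+* k) (σA : A →+* A)
    (hσ : ∀ c : k, σA (algebraMap k A c) = algebraMap k A (σk c))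
    (τ : A ⊗[k] A →+* A ⊗[k] A)
    (hτ : ∀ a b : A, τ (a ⊗ₜ[k] b) = σA a ⊗ₜ[k] σA b)
    (χ : (A ⊗[k] A)ˣ)
    (hχsq : χ ^ 2 = 1)
    (hχτ : τ χ.val = χ.val)
    (hcoc : amitsurP2 k A χ.val = amitsurP1 k A χ.val * amitsurP3 k A χ.val) :
    ∃ (α : Aˣ) (a b : k),
      χ.val = ((α⁻¹ : Aˣ) : A) ⊗ₜ[k] ((α : Aˣ) : A) ∧
      ((α : Aˣ) : A) ^ 2 = algebraMap k A a ∧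
      σA ((α : Aˣ) : A) = algebraMap k A b * ((α : Aˣ) : A) :=
  h1_sigma_mu2_surjective_general k A σA τ hτ χ hχsq hχτ hcoc
end

section
/- Let k be a σ-field, A a k-σ-algebra, n ≥ 1, and λ₀, …, λ_{n−1} ∈ k. Define L_A : A → A by L_A(x) = σ_A^n(x) + Σ_{i<n} algebraMap k A (λᵢ) · σ_A^i(x), and define L on A ⊗[k] A analogously using τ in place of σ_A. Suppose χ ∈ A ⊗[k] A satisfies L(χ) = 0 and the additive cocycle condition ∂₂(χ) = ∂₁(χ) + ∂₃(χ). Then there exist α ∈ A and c ∈ k such that χ = 1 ⊗ α − α ⊗ 1 and L_A(α) = algebraMap k A (c). (This is the surjectivity part of the computation of H¹_σ(A/k, G) for the σ-closed subgroup G of 𝔾ₐ defined by the linear difference equation L(y) = 0.) -/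
open TensorProduct

/-- Every additive 1-cocycle for the σ-closed subgroup `G ≤ 𝔾ₐ` defined by a
linear difference equation `L(y) = 0` is of the form `1 ⊗ α − α ⊗ 1` with
`L(α) ∈ k`. -/
theorem h1_sigma_Ga_subgroup_surjective (k A : Type*) [Field k] [CommRing A] [Algebra k A]
    (σk : k →+* k) (σA : A →+* A)
    (hσ : ∀ c : k, σA (algebraMap k A c) = algebraMap k A (σk c))
    (τ : A ⊗[k] A →+* A ⊗[k] A)
    (hτ : ∀ a b : A, τ (a ⊗ₜ[k] b) = σA a ⊗ₜ[k] σA b)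
    (n : ℕ) (hn : 1 ≤ n) (lam : Fin n → k)
    (χ : A ⊗[k] A)
    (hL : (τ ^ n) χ +
      ∑ i : Fin n, algebraMap k (A ⊗[k] A) (lam i) * (τ ^ (i : ℕ)) χ = 0)
    (hcoc : amitsurP2 k A χ = amitsurP1 k A χ + amitsurP3 k A χ) :
    ∃ (α : A) (c : k),
      χ = (1 : A) ⊗ₜ[k] α - α ⊗ₜ[k] (1 : A) ∧
      (σA ^ n) α + ∑ i : Fin n, algebraMap k A (lam i) * (σA ^ (i : ℕ)) α =
        algebraMap k A c := by
  rcases subsingleton_or_nontrivial A with hA | hA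
  · haveI : Subsingleton (A ⊗[k] A) := Module.subsingleton A _
    exact ⟨0, 0, Subsingleton.elim _ _, Subsingleton.elim _ _⟩
  -- construct a k-linear retraction φ : A → k with φ 1 = 1
  obtain ⟨φ, hφ⟩ := LinearMap.exists_leftInverse_of_injective
    (Algebra.linearMap k A)
    (by rw [LinearMap.ker_eq_bot]; exact (algebraMap k A).injective)
  have hφalg : ∀ c : k, φ (algebraMap k A c) = c := fun c => by
    have := LinearMap.congr_fun hφ c
    simpa using this
  have hφ1 : φ (1 : A) = 1 := by simpa using hφalg 1
  set Φ : A ⊗[k] A →ₗ[k] A := TensorProduct.lift ((LinearMap.lsmul k A) ∘ₗ φ) with hΦ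
  set Φ₁ : A ⊗[k] (A ⊗[k] A) →ₗ[k] A ⊗[k] A :=
    TensorProduct.lift ((LinearMap.lsmul k (A ⊗[k] A)) ∘ₗ φ) with hΦ₁
  have hΦt : ∀ (a b : A), Φ (a ⊗ₜ[k] b) = φ a • b := fun a b => by
    simp [hΦ]
  have hΦ₁t : ∀ (a : A) (x : A ⊗[k] A), Φ₁ (a ⊗ₜ[k] x) = φ a • x := fun a x => by
    simp [hΦ₁]
  have h1 : ∀ x : A ⊗[k] A, Φ₁ (amitsurP1 k A x) = x := by
    intro x
    induction x using TensorProduct.induction_on with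
    | zero => simp
    | tmul a b =>
        rw [amitsurP1, Algebra.TensorProduct.includeRight_apply, hΦ₁t, hφ1, one_smul]
    | add x y hx hy => rw [map_add, map_add, hx, hy]
  have h2 : ∀ x : A ⊗[k] A, Φ₁ (amitsurP2 k A x) = (1 : A) ⊗ₜ[k] Φ x := by
    intro x
    induction x using TensorProduct.induction_on with
    | zero => simp
    | tmul a b =>
        rw [amitsurP2, Algebra.TensorProduct.map_tmul, AlgHom.coe_id, id_eq,
          Algebra.TensorProduct.includeRight_apply, hΦ₁t, hΦt, tmul_smul, smul_tmul']
    | add x y hx hy => rw [map_add, map_add, hx, hy, map_add, tmul_add]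
  have h3 : ∀ x : A ⊗[k] A, Φ₁ (amitsurP3 k A x) = Φ x ⊗ₜ[k] (1 : A) := by
    intro x
    induction x using TensorProduct.induction_on with
    | zero => simp
    | tmul a b =>
        rw [amitsurP3, Algebra.TensorProduct.map_tmul, AlgHom.coe_id, id_eq,
          Algebra.TensorProduct.includeLeft_apply, hΦ₁t, hΦt, smul_tmul']
    | add x y hx hy => rw [map_add, map_add, hx, hy, map_add, add_tmul]
  set α : A := Φ χ with hα
  have hχ : χ = (1 : A) ⊗ₜ[k] α - α ⊗ₜ[k] (1 : A) := by
    have h := congrArg Φ₁ hcoc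
    rw [map_add, h1, h2, h3] at h
    rw [← hα] at h
    exact eq_sub_of_add_eq h.symm
  -- powers of τ on the two kinds of tensors
  have hτ1 : ∀ (i : ℕ) (x : A), (τ ^ i) ((1 : A) ⊗ₜ[k] x) = (1 : A) ⊗ₜ[k] (σA ^ i) x := by
    intro i
    induction i with
    | zero => intro x; simp
    | succ i ih =>
        intro x
        rw [pow_succ, RingHom.mul_def, RingHom.comp_apply, hτ, map_one, ih,
          pow_succ, RingHom.mul_def, RingHom.comp_apply]
  have hτ2 : ∀ (i : ℕ) (x : A), (τ ^ i) (x ⊗ₜ[k] (1 : A)) = ((σA ^ i) x) ⊗ₜ[k] (1 : A) := by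
    intro i
    induction i with
    | zero => intro x; simp
    | succ i ih =>
        intro x
        rw [pow_succ, RingHom.mul_def, RingHom.comp_apply, hτ, map_one, ih,
          pow_succ, RingHom.mul_def, RingHom.comp_apply]
  have halg1 : ∀ (c : k) (x : A),
      algebraMap k (A ⊗[k] A) c * ((1 : A) ⊗ₜ[k] x) = (1 : A) ⊗ₜ[k] (algebraMap k A c * x) := by
    intro c x
    rw [← Algebra.TensorProduct.includeRight.commutes c,
      Algebra.TensorProduct.includeRight_apply, Algebra.TensorProduct.tmul_mul_tmul, one_mul]
  have halg2 : ∀ (c : k) (x : A),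
      algebraMap k (A ⊗[k] A) c * (x ⊗ₜ[k] (1 : A)) = (algebraMap k A c * x) ⊗ₜ[k] (1 : A) := by
    intro c x
    rw [Algebra.TensorProduct.algebraMap_apply, Algebra.TensorProduct.tmul_mul_tmul, one_mul]
  set β : A := (σA ^ n) α + ∑ i : Fin n, algebraMap k A (lam i) * (σA ^ (i : ℕ)) α with hβ
  have e1 : ∀ i : ℕ, (τ ^ i) χ = (1 : A) ⊗ₜ[k] ((σA ^ i) α) - ((σA ^ i) α) ⊗ₜ[k] (1 : A) := by
    intro i
    rw [hχ, map_sub, hτ1, hτ2]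
  have e2 : ∀ i : Fin n, algebraMap k (A ⊗[k] A) (lam i) * (τ ^ (i : ℕ)) χ
      = (1 : A) ⊗ₜ[k] (algebraMap k A (lam i) * (σA ^ (i : ℕ)) α)
        - (algebraMap k A (lam i) * (σA ^ (i : ℕ)) α) ⊗ₜ[k] (1 : A) := by
    intro i
    rw [e1, mul_sub, halg1, halg2]
  have key : (τ ^ n) χ + ∑ i : Fin n, algebraMap k (A ⊗[k] A) (lam i) * (τ ^ (i : ℕ)) χ
      = (1 : A) ⊗ₜ[k] β - β ⊗ₜ[k] (1 : A) := by
    rw [e1 n, Finset.sum_congr rfl (fun i _ => e2 i), Finset.sum_sub_distrib, hβ,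
      tmul_add, add_tmul, tmul_sum, sum_tmul]
    abel
  have hLχ : (1 : A) ⊗ₜ[k] β - β ⊗ₜ[k] (1 : A) = 0 := key.symm.trans hL
  have hββ : (1 : A) ⊗ₜ[k] β = β ⊗ₜ[k] (1 : A) := by
    have := sub_eq_zero.mp hLχ
    exact this
  refine ⟨α, φ β, hχ, ?_⟩
  have hΦβ := congrArg Φ hββ
  rw [hΦt, hΦt, hφ1, one_smul, Algebra.smul_def, mul_one] at hΦβ
  rw [← hβ]
  exact hΦβ
end

section
/- Let k be a σ-field, A a nonzero k-σ-algebra, n ≥ 1, and λ₀, …, λ_{n−1} ∈ k. Define L_k : k → k by L_k(x) = σ_k^n(x) + Σ_{i<n} λᵢ · σ_k^i(x) and L_A : A → A by L_A(x) = σ_A^n(x) + Σ_{i<n} algebraMap k A (λᵢ) · σ_A^i(x). Let α, α' ∈ A. Then the following are equivalent: (i) there exists g ∈ A with L_A(g) = 0 and 1 ⊗ α' − α' ⊗ 1 = 1 ⊗ (α + g) − (α + g) ⊗ 1 in A ⊗[k] A; (ii) there exists μ ∈ k with L_A(α' − α) = algebraMap k A (L_k(μ)). (This is the criterion for when two elements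 α, α' define cohomologous additive 1-cocycles for the σ-closed subgroup G of 𝔾ₐ defined by L(y) = 0, underlying the classification of the G-torsors X_a up to isomorphism.) -/
open TensorProduct

/- `L_A` is additive and, as σ_A extends σ_k, restricts to `L_k` on `k`. Over a field,
`1 ⊗ x = x ⊗ 1` in `A ⊗[k] A` forces `x ∈ k` (apply `φ ⊗ id` for a functional `φ` with `φ 1 = 1`),
so the two cocycles agree exactly when `α' − (α + g) ∈ k`. Then `L_A(α' − α) = L_A(g) + L_k(μ)`,
which gives both directions. -/

def linearDifferenceOperator {R : Type*} [Semiring R] (σ : R →+* R) {n : ℕ} (a : Fin n → R) :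
    R →+ R where
  toFun x := (σ ^ n) x + ∑ i : Fin n, a i * (σ ^ (i : ℕ)) x
  map_zero' := by simp
  map_add' x y := by
    simp only [map_add, mul_add, Finset.sum_add_distrib]
    abel

theorem linearDifferenceOperator_apply {R : Type*} [Semiring R] (σ : R →+* R) {n : ℕ}
    (a : Fin n → R) (x : R) :
    linearDifferenceOperator σ a x = (σ ^ n) x + ∑ i : Fin n, a i * (σ ^ (i : ℕ)) x :=
  rfl

theorem linearDifferenceOperator_algebraMap {k A : Type*} [CommSemiring k] [Semiring A]
    [Algebra k A] {σk : k →+* k} {σA : A →+* A}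
    (hσ : ∀ c : k, σA (algebraMap k A c) = algebraMap k A (σk c)) {n : ℕ} (a : Fin n → k)
    (c : k) :
    linearDifferenceOperator σA (fun i => algebraMap k A (a i)) (algebraMap k A c) =
      algebraMap k A (linearDifferenceOperator σk a c) := by
  have hpow (m : ℕ) : (σA ^ m) (algebraMap k A c) = algebraMap k A ((σk ^ m) c) := by
    simpa only [RingHom.coe_pow] using
      (Function.Semiconj.iterate_right (f := algebraMap k A) (fun c => (hσ c).symm) m c).symm
  simp only [linearDifferenceOperator_apply, map_add, map_sum, map_mul, hpow]

theorem mem_range_algebraMap_of_one_tmul_eq_tmul_one {k A : Type*} [Field k] [Ring A]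
    [Algebra k A] [Nontrivial A] {x : A} (h : (1 : A) ⊗ₜ[k] x = x ⊗ₜ[k] 1) :
    x ∈ Set.range (algebraMap k A) := by
  obtain ⟨φ, hφ⟩ := Module.Projective.exists_dual_eq_one k (one_ne_zero : (1 : A) ≠ 0)
  refine ⟨φ x, ?_⟩
  have := congrArg (TensorProduct.lid k A ∘ φ.rTensor A) h
  simpa [hφ, Algebra.algebraMap_eq_smul_one] using this.symm

theorem one_tmul_sub_tmul_one_eq_iff {k A : Type*} [Field k] [Ring A] [Algebra k A]
    [Nontrivial A] {x y : A} :
    (1 : A) ⊗ₜ[k] x - x ⊗ₜ[k] 1 = (1 : A) ⊗ₜ[k] y - y ⊗ₜ[k] 1 ↔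
      x - y ∈ Set.range (algebraMap k A) := by
  rw [sub_eq_sub_iff_sub_eq_sub, ← tmul_sub, ← sub_tmul]
  refine ⟨mem_range_algebraMap_of_one_tmul_eq_tmul_one, ?_⟩
  rintro ⟨c, hc⟩
  rw [← hc, Algebra.algebraMap_eq_smul_one, smul_tmul]

theorem cocycles_Ga_subgroup_equivalent_iff_general (k A : Type*) [Field k] [CommRing A]
    [Algebra k A] [Nontrivial A]
    (σk : k →+* k) (σA : A →+* A)
    (hσ : ∀ c : k, σA (algebraMap k A c) = algebraMap k A (σk c))
    (n : ℕ) (lam : Fin n → k)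
    (α α' : A) :
    (∃ g : A,
      (σA ^ n) g + ∑ i : Fin n, algebraMap k A (lam i) * (σA ^ (i : ℕ)) g = 0 ∧
      (1 : A) ⊗ₜ[k] α' - α' ⊗ₜ[k] (1 : A) =
        (1 : A) ⊗ₜ[k] (α + g) - (α + g) ⊗ₜ[k] (1 : A)) ↔
    (∃ μ : k,
      (σA ^ n) (α' - α) +
          ∑ i : Fin n, algebraMap k A (lam i) * (σA ^ (i : ℕ)) (α' - α) =
        algebraMap k A ((σk ^ n) μ + ∑ i : Fin n, lam i * (σk ^ (i : ℕ)) μ)) := by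
  have hL := linearDifferenceOperator_algebraMap hσ lam
  simp only [← linearDifferenceOperator_apply, one_tmul_sub_tmul_one_eq_iff]
  constructor
  · rintro ⟨g, hg, μ, hμ⟩
    refine ⟨μ, ?_⟩
    rw [show α' - α = g + algebraMap k A μ by rw [hμ]; abel, map_add, hg, hL, zero_add]
  · rintro ⟨μ, hμ⟩
    refine ⟨α' - α - algebraMap k A μ, ?_, μ, by abel⟩
    rw [map_sub, hμ, hL, sub_self]

/-- Two additive 1-cocycles `1 ⊗ α − α ⊗ 1` and `1 ⊗ α' − α' ⊗ 1` for the
σ-closed subgroup `G ≤ 𝔾ₐ` defined by `L(y) = 0` are cohomologous iff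
`L(α' − α) ∈ L(k)`. -/
theorem cocycles_Ga_subgroup_equivalent_iff (k A : Type*) [Field k] [CommRing A]
    [Algebra k A] [Nontrivial A]
    (σk : k →+* k) (σA : A →+* A)
    (hσ : ∀ c : k, σA (algebraMap k A c) = algebraMap k A (σk c))
    (n : ℕ) (hn : 1 ≤ n) (lam : Fin n → k)
    (α α' : A) :
    (∃ g : A,
      (σA ^ n) g + ∑ i : Fin n, algebraMap k A (lam i) * (σA ^ (i : ℕ)) g = 0 ∧
      (1 : A) ⊗ₜ[k] α' - α' ⊗ₜ[k] (1 : A) =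
        (1 : A) ⊗ₜ[k] (α + g) - (α + g) ⊗ₜ[k] (1 : A)) ↔
    (∃ μ : k,
      (σA ^ n) (α' - α) +
          ∑ i : Fin n, algebraMap k A (lam i) * (σA ^ (i : ℕ)) (α' - α) =
        algebraMap k A ((σk ^ n) μ + ∑ i : Fin n, lam i * (σk ^ (i : ℕ)) μ)) :=
  cocycles_Ga_subgroup_equivalent_iff_general k A σk σA hσ n lam α α'
end

section
/- Let k be a σ-field of characteristic different from 2, and let K be a field that is a k-algebra (a field extension of k) equipped with a ring endomorphism σ_K such that σ_K(algebraMap k K c) = algebraMap k K (σ_k c) for all c ∈ k. Then there is no element x ∈ K with x² = 1 and σ_K(x) = −x. (Consequently, the G-torsor X given by X(R) = {x ∈ R | x² = 1, σ(x) = −x}, for the σ-algebraic subgroup G of 𝔾ₘ with G(R) = {g ∈ Rˣ | g² = 1, σ(g) = g}, is non-trivial over every σ-field extension of k.) -/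
/-- If `k` is a σ-field of characteristic `≠ 2` and `K/k` is a σ-field
extension, then there is no `x ∈ K` with `x² = 1` and `σ(x) = −x`; hence the
torsor `X = {x | x² = 1, σ(x) = −x}` is non-trivial over every σ-field
extension of `k`. -/
theorem no_point_in_sigma_field_extension (k K : Type*) [Field k] [Field K]
    [Algebra k K]
    (htwo : (2 : k) ≠ 0)
    (σk : k →+* k) (σK : K →+* K)
    (hσ : ∀ c : k, σK (algebraMap k K c) = algebraMap k K (σk c)) :
    ¬ ∃ x : K, x ^ 2 = 1 ∧ σK x = -x := by
  rintro ⟨x, hx, hs⟩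
  have h2 : (2 : K) ≠ 0 := by
    intro h
    apply htwo
    apply (algebraMap k K).injective
    rw [map_ofNat, map_zero]
    exact h
  have hfac : (x - 1) * (x + 1) = 0 := by linear_combination hx
  rcases mul_eq_zero.mp hfac with h | h
  · have hx1 : x = 1 := by linear_combination h
    rw [hx1, map_one] at hs
    apply h2
    linear_combination hs
  · have hx1 : x = -1 := by linear_combination h
    rw [hx1] at hs
    simp at hs
    apply h2
    linear_combination -hs
end

section
/- Let k be a σ-field, and let a, b ∈ k with a ≠ 0 and σ_k(a) = a · b². Let R be a k-σ-algebra and let x₁, x₂ ∈ R satisfy xᵢ² = algebraMap k R (a) and σ_R(xᵢ) = algebraMap k R (b) · xᵢ for i = 1, 2. Then there exists a unique g ∈ R such that g² = 1, σ_R(g) = g, and x₂ = g · x₁. (This expresses that X_{a,b}, given by X_{a,b}(R) = {x ∈ R | x² = a, σ(x) = b x}, is a torsor under the σ-algebraic subgroup G of 𝔾ₘ with G(R) = {g ∈ Rˣ | g² = 1, σ(g) = g}: the group acts simply transitively on the points of X_{a,b}.) -/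
/-! Since `x₁² = a` is a unit, so is `x₁`, and `g = x₂ x₁⁻¹` is the only candidate. It satisfies
`g² = 1` because `x₁` and `x₂` have the same square, and it is `σ`-fixed because `σ g` and `g`
both send the unit `σ x₁ = b x₁` to `σ x₂ = b x₂`. -/

section

variable {M F : Type*} [CommMonoid M] [FunLike F M M] [MonoidHomClass F M M]

theorem map_eq_self_of_map_mul_eq {σ : F} {c g x : M} (hx : IsUnit (σ x))
    (hσx : σ x = c * x) (hσgx : σ (g * x) = c * (g * x)) : σ g = g := by
  refine hx.mul_left_inj.mp ?_
  calc σ g * σ x = σ (g * x) := (map_mul σ g x).symm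
    _ = g * σ x := by rw [hσgx, hσx, mul_left_comm]

theorem existsUnique_sq_eq_one_map_eq_self_mul_eq (σ : F) {a c x₁ x₂ : M} (ha : IsUnit a)
    (h1 : x₁ ^ 2 = a) (h1' : σ x₁ = c * x₁) (h2 : x₂ ^ 2 = a) (h2' : σ x₂ = c * x₂) :
    ∃! g : M, g ^ 2 = 1 ∧ σ g = g ∧ x₂ = g * x₁ := by
  obtain ⟨u, rfl⟩ : IsUnit x₁ := (isUnit_pow_iff two_ne_zero).mp (h1 ▸ ha)
  have hx₂ : x₂ = x₂ * ↑u⁻¹ * u := (Units.inv_mul_cancel_right x₂ u).symm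
  refine ⟨x₂ * ↑u⁻¹, ⟨?_, ?_, hx₂⟩,
    fun g ⟨_, _, hg⟩ => (Units.eq_mul_inv_iff_mul_eq u).mpr hg.symm⟩
  · rw [mul_pow, h2, ← h1, ← mul_pow, Units.mul_inv, one_pow]
  · exact map_eq_self_of_map_mul_eq (u.isUnit.map σ) h1' (hx₂ ▸ h2')

end

theorem torsor_Xab_simply_transitive_general (k R : Type*) [Field k] [CommRing R] [Algebra k R]
    (σR : R →+* R)
    (a b : k) (ha : a ≠ 0)
    (x₁ x₂ : R)
    (h1 : x₁ ^ 2 = algebraMap k R a) (h1' : σR x₁ = algebraMap k R b * x₁)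
    (h2 : x₂ ^ 2 = algebraMap k R a) (h2' : σR x₂ = algebraMap k R b * x₂) :
    ∃! g : R, g ^ 2 = 1 ∧ σR g = g ∧ x₂ = g * x₁ :=
  existsUnique_sq_eq_one_map_eq_self_mul_eq σR (ha.isUnit.map (algebraMap k R)) h1 h1' h2 h2'

/-- `X_{a,b}(R) = {x ∈ R | x² = a, σ(x) = b x}` is a torsor under the σ-algebraic
subgroup `G ≤ 𝔾ₘ` with `G(R) = {g ∈ Rˣ | g² = 1, σ(g) = g}`: given two points
`x₁, x₂` there is a unique `g` with `g² = 1`, `σ(g) = g` and `x₂ = g x₁`. -/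
theorem torsor_Xab_simply_transitive (k R : Type*) [Field k] [CommRing R] [Algebra k R]
    (σk : k →+* k) (σR : R →+* R)
    (hσ : ∀ c : k, σR (algebraMap k R c) = algebraMap k R (σk c))
    (a b : k) (ha : a ≠ 0) (hab : σk a = a * b ^ 2)
    (x₁ x₂ : R)
    (h1 : x₁ ^ 2 = algebraMap k R a) (h1' : σR x₁ = algebraMap k R b * x₁)
    (h2 : x₂ ^ 2 = algebraMap k R a) (h2' : σR x₂ = algebraMap k R b * x₂) :
    ∃! g : R, g ^ 2 = 1 ∧ σR g = g ∧ x₂ = g * x₁ :=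
  torsor_Xab_simply_transitive_general k R σR a b ha x₁ x₂ h1 h1' h2 h2'
end

section
/- Let k be a σ-field, and let a, b ∈ k with a ≠ 0 and σ_k(a) = a · b². Then there exist a nonzero commutative k-algebra A, a ring endomorphism σ_A of A making A a k-σ-algebra, and a unit α ∈ Aˣ such that α² = algebraMap k A (a) and σ_A(α) = algebraMap k A (b) · α. (For example A = k[y]/(y² − a) with σ_A determined by σ_A(y) = b·y; this shows the torsor X_{a,b} is nonempty, i.e., trivial over some k-σ-algebra.) -/
universe u

/-- A witness that the torsor `X_{a,b} = {x | x² = a, σ(x) = b x}` has a (unit)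
point in some nonzero `k`-σ-algebra. -/
structure XabPoint (k : Type u) [Field k] (σk : k →+* k) (a b : k) where
  A : Type u
  [commRing : CommRing A]
  [algebra : Algebra k A]
  σA : A →+* A
  nontrivial : Nontrivial A
  compat : ∀ c : k, σA (algebraMap k A c) = algebraMap k A (σk c)
  α : Aˣ
  sq : ((α : Aˣ) : A) ^ 2 = algebraMap k A a
  sigma : σA ((α : Aˣ) : A) = algebraMap k A b * ((α : Aˣ) : A)

lemma Xab_root_sq (k : Type u) [Field k] (a : k) :
    (AdjoinRoot.root (Polynomial.X ^ 2 - Polynomial.C a)) ^ 2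
      = algebraMap k (AdjoinRoot (Polynomial.X ^ 2 - Polynomial.C a)) a := by
  have := AdjoinRoot.eval₂_root (Polynomial.X ^ 2 - Polynomial.C a)
  simp only [Polynomial.eval₂_sub, Polynomial.eval₂_pow, Polynomial.eval₂_X,
    Polynomial.eval₂_C, sub_eq_zero] at this
  rw [this, AdjoinRoot.algebraMap_eq]

/-- For `a, b ∈ k` with `a ≠ 0` and `σ(a) = a b²`, the torsor `X_{a,b}` is
trivial over some nonzero `k`-σ-algebra, e.g. `A = k[y]/(y² − a)` with
`σ(y) = b y`. -/
theorem exists_point_of_Xab (k : Type u) [Field k] (σk : k →+* k)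
    (a b : k) (ha : a ≠ 0) (hab : σk a = a * b ^ 2) :
    Nonempty (XabPoint k σk a b) := by
  let p : Polynomial k := Polynomial.X ^ 2 - Polynomial.C a
  let A := AdjoinRoot p
  have hdeg : p.degree = 2 := by
    show (Polynomial.X ^ 2 - Polynomial.C a).degree = (2 : WithBot ℕ)
    compute_degree!
  have hroot : (AdjoinRoot.root p) ^ 2 = algebraMap k A a := Xab_root_sq k a
  have heval : Polynomial.eval₂ ((algebraMap k A).comp σk)
      (algebraMap k A b * AdjoinRoot.root p) p = 0 := by
    show Polynomial.eval₂ _ _ (Polynomial.X ^ 2 - Polynomial.C a) = 0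
    simp only [Polynomial.eval₂_sub, Polynomial.eval₂_pow, Polynomial.eval₂_X,
      Polynomial.eval₂_C, RingHom.comp_apply]
    rw [mul_pow, hroot, hab, sub_eq_zero, map_mul, map_pow]
    ring
  have hinv : AdjoinRoot.root p * (algebraMap k A a⁻¹ * AdjoinRoot.root p) = 1 := by
    rw [mul_comm (algebraMap k A a⁻¹), ← mul_assoc, ← pow_two, hroot, ← map_mul,
      mul_inv_cancel₀ ha, map_one]
  refine ⟨⟨A, AdjoinRoot.lift ((algebraMap k A).comp σk)
      (algebraMap k A b * AdjoinRoot.root p) heval,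
    AdjoinRoot.nontrivial p (by rw [hdeg]; norm_num),
    fun c => ?_,
    ⟨AdjoinRoot.root p, algebraMap k A a⁻¹ * AdjoinRoot.root p, hinv,
      by rw [mul_comm]; exact hinv⟩, hroot, AdjoinRoot.lift_root heval⟩⟩
  show AdjoinRoot.lift _ _ heval (AdjoinRoot.of p c) = AdjoinRoot.of p (σk c)
  rw [AdjoinRoot.lift_of heval, RingHom.comp_apply, AdjoinRoot.algebraMap_eq]
end

section
/- Let k be a σ-ring, A a k-σ-algebra that is faithfully flat as a k-module, and B₀ a k-σ-algebra. Equip B := B₀ ⊗[k] A with the ring endomorphism σ_B determined by σ_B(b ⊗ a) = σ_{B₀}(b) ⊗ σ_A(a) and with its A-algebra structure via the right tensor factor. Suppose there is a finite subset T ⊆ B such that B is generated as an A-algebra by the set {σ_B^i(t) | t ∈ T, i ≥ 0}. Then there is a finite subset T₀ ⊆ B₀ such that B₀ is generated as a k-algebra by the set {σ_{B₀}^i(t) | t ∈ T₀, i ≥ 0}. (This expresses that being finitely σ-generated descends along faithfully flat extensions of difference rings.) -/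
open TensorProduct

/-!
Let `T₀` collect the left tensor factors of the elements of `T`, and let `C ⊆ B₀` be the
`k`-algebra generated by their `σ`-orbits. Since `σ_B^i (b ⊗ a) = σ_{B₀}^i b ⊗ σ_A^i a`, every
generator `σ_B^i t` of `B₀ ⊗[k] A` lies in the image of `C ⊗[k] A`, so `C ⊗[k] A → B₀ ⊗[k] A`
is surjective, and by faithful flatness of `A` so is `C → B₀`.
-/

lemma Module.FaithfullyFlat.rTensor_surjective_iff_surjective {R M N P : Type*} [CommRing R]
    [AddCommGroup M] [Module R M] [Module.FaithfullyFlat R M]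
    [AddCommGroup N] [Module R N] [AddCommGroup P] [Module R P] (f : N →ₗ[R] P) :
    Function.Surjective (f.rTensor M) ↔ Function.Surjective f := by
  rw [← LinearMap.lTensor_surj_iff_rTensor_surj, lTensor_surjective_iff_surjective]

namespace Subalgebra

variable {R A B : Type*} [CommRing R] [CommRing A] [Algebra R A] [CommRing B] [Algebra R B]

lemma tmul_mem_range_map_val {C : Subalgebra R B} {b : B} (hb : b ∈ C) (a : A) :
    b ⊗ₜ[R] a ∈ (Algebra.TensorProduct.map C.val (AlgHom.id R A)).range :=
  ⟨⟨b, hb⟩ ⊗ₜ[R] a, rfl⟩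

lemma eq_top_of_range_map_val_eq_top [Module.FaithfullyFlat R A] (C : Subalgebra R B)
    (h : (Algebra.TensorProduct.map C.val (AlgHom.id R A)).range = ⊤) : C = ⊤ := by
  have hsurj : Function.Surjective (C.val.toLinearMap.rTensor A) :=
    (AlgHom.range_eq_top _).mp h
  rw [Module.FaithfullyFlat.rTensor_surjective_iff_surjective] at hsurj
  rw [← range_val C]
  exact (AlgHom.range_eq_top _).mpr hsurj

end Subalgebra

section Iterates

variable {k A B₀ : Type*} [CommRing k] [CommRing A] [Algebra k A] [CommRing B₀] [Algebra k B₀]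
  {σA : A →+* A} {σB₀ : B₀ →+* B₀} {σB : B₀ ⊗[k] A →+* B₀ ⊗[k] A}

lemma pow_apply_tmul_of_apply_tmul (hσB : ∀ (b : B₀) (a : A), σB (b ⊗ₜ[k] a) = σB₀ b ⊗ₜ[k] σA a)
    (i : ℕ) (b : B₀) (a : A) : (σB ^ i) (b ⊗ₜ[k] a) = (σB₀ ^ i) b ⊗ₜ[k] (σA ^ i) a := by
  induction i generalizing b a with
  | zero => rfl
  | succ n ih => simp only [pow_succ, RingHom.coe_mul, Function.comp_apply, hσB, ih]

lemma pow_apply_mem_range_map_val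
    (hσB : ∀ (b : B₀) (a : A), σB (b ⊗ₜ[k] a) = σB₀ b ⊗ₜ[k] σA a)
    {C : Subalgebra k B₀} {S : Finset (B₀ × A)} (hC : ∀ p ∈ S, ∀ i : ℕ, (σB₀ ^ i) p.1 ∈ C)
    (i : ℕ) : (σB ^ i) (∑ p ∈ S, p.1 ⊗ₜ[k] p.2) ∈
      (Algebra.TensorProduct.map C.val (AlgHom.id k A)).range := by
  rw [map_sum]
  refine Subalgebra.sum_mem _ fun p hp => ?_
  rw [pow_apply_tmul_of_apply_tmul hσB]
  exact Subalgebra.tmul_mem_range_map_val (hC p hp i) _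

end Iterates

theorem finitely_sigma_generated_descends_general
    (k A B₀ : Type*) [CommRing k]
    [CommRing A] [Algebra k A] [Module.FaithfullyFlat k A]
    [CommRing B₀] [Algebra k B₀]
    (σA : A →+* A) (σB₀ : B₀ →+* B₀)
    (σB : B₀ ⊗[k] A →+* B₀ ⊗[k] A)
    (hσB : ∀ (b : B₀) (a : A), σB (b ⊗ₜ[k] a) = σB₀ b ⊗ₜ[k] σA a)
    (T : Finset (B₀ ⊗[k] A))
    (hgen : Algebra.adjoin k
      (Set.range (Algebra.TensorProduct.includeRight : A →ₐ[k] B₀ ⊗[k] A) ∪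
        {x | ∃ t ∈ T, ∃ i : ℕ, x = (σB ^ i) t}) = ⊤) :
    ∃ T₀ : Finset B₀,
      Algebra.adjoin k {x | ∃ t ∈ T₀, ∃ i : ℕ, x = (σB₀ ^ i) t} = ⊤ := by
  classical
  choose S hS using fun t : B₀ ⊗[k] A => TensorProduct.exists_finset (R := k) t
  refine ⟨T.biUnion fun t => (S t).image Prod.fst, ?_⟩
  apply Subalgebra.eq_top_of_range_map_val_eq_top (A := A)
  rw [eq_top_iff, ← hgen, Algebra.adjoin_le_iff]
  rintro _ (⟨a, rfl⟩ | ⟨t, ht, i, rfl⟩)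
  · exact Subalgebra.tmul_mem_range_map_val (one_mem _) a
  · rw [hS t]
    refine pow_apply_mem_range_map_val hσB (fun p hp j => Algebra.subset_adjoin ?_) i
    exact ⟨p.1, Finset.mem_biUnion.2 ⟨t, ht, Finset.mem_image_of_mem _ hp⟩, j, rfl⟩

/-- Being finitely σ-generated descends along faithfully flat extensions of
difference rings: if `B = B₀ ⊗[k] A` is generated as an `A`-algebra by the
σ-orbits of a finite set, then `B₀` is generated as a `k`-algebra by the
σ-orbits of a finite set. -/
theorem finitely_sigma_generated_descends
    (k A B₀ : Type*) [CommRing k]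
    [CommRing A] [Algebra k A] [Module.FaithfullyFlat k A]
    [CommRing B₀] [Algebra k B₀]
    (σk : k →+* k) (σA : A →+* A) (σB₀ : B₀ →+* B₀)
    (hσA : ∀ c : k, σA (algebraMap k A c) = algebraMap k A (σk c))
    (hσB₀ : ∀ c : k, σB₀ (algebraMap k B₀ c) = algebraMap k B₀ (σk c))
    (σB : B₀ ⊗[k] A →+* B₀ ⊗[k] A)
    (hσB : ∀ (b : B₀) (a : A), σB (b ⊗ₜ[k] a) = σB₀ b ⊗ₜ[k] σA a)
    (T : Finset (B₀ ⊗[k] A))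
    (hgen : Algebra.adjoin k
      (Set.range (Algebra.TensorProduct.includeRight : A →ₐ[k] B₀ ⊗[k] A) ∪
        {x | ∃ t ∈ T, ∃ i : ℕ, x = (σB ^ i) t}) = ⊤) :
    ∃ T₀ : Finset B₀,
      Algebra.adjoin k {x | ∃ t ∈ T₀, ∃ i : ℕ, x = (σB₀ ^ i) t} = ⊤ :=
  finitely_sigma_generated_descends_general k A B₀ σA σB₀ σB hσB T hgen
end

section
/- Let k be a σ-ring, A a k-σ-algebra that is faithfully flat as a k-module, and B a commutative A-algebra with a ring endomorphism σ_B satisfying σ_B(algebraMap A B a) = algebraMap A B (σ_A a) for all a ∈ A. Let τ_{B⊗A} and τ_{A⊗B} be the ring endomorphisms of B ⊗[k] A and A ⊗[k] B determined by b ⊗ a ↦ σ_B(b) ⊗ σ_A(a) and a ⊗ b ↦ σ_A(a) ⊗ σ_B(b). Suppose φ : B ⊗[k] A → A ⊗[k] B is an isomorphism of k-algebras such that: (1) φ((algebraMap A B a) ⊗ a') = a ⊗ (algebraMap A B a') for all a, a' ∈ A; (2) φ ∘ τ_{B⊗A} = τ_{A⊗B} ∘ φ; (3) φ₁₃ = φ₂₃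 ∘ φ₁₂, where φ₁₂ : B ⊗[k] A ⊗[k] A → A ⊗[k] B ⊗[k] A, φ₂₃ : A ⊗[k] B ⊗[k] A → A ⊗[k] A ⊗[k] B, and φ₁₃ : B ⊗[k] A ⊗[k] A → A ⊗[k] A ⊗[k] B are the k-algebra homomorphisms determined on pure tensors by φ₁₂(b ⊗ a ⊗ a') = φ(b ⊗ a) ⊗ a', φ₂₃(a ⊗ b ⊗ a') = a ⊗ φ(b ⊗ a'), and φ₁₃(b ⊗ a ⊗ a') = (1 ⊗ a ⊗ 1) · ι(φ(b ⊗ a')) with ι : A ⊗[k] B → A ⊗[k] A ⊗[k] B the k-algebra homomorphism determined by ι(a ⊗ b) = a ⊗ 1 ⊗ b. Define B₀ = {b ∈ B | φ(b ⊗ 1) = 1 ⊗ b}. Then B₀ is a k-subalgebra of B with σ_B(B₀) ⊆ B₀, and the k-algebra homomorphism A ⊗[k] B₀ → B determined by a ⊗ b ↦ (algebraMap A B a) · b is bijective. (This is faithfully flat descent for difference algebras: a descent datum on an A-σ-algebra descends it to a k-σ-algebra.) -/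
/-!
The descent datum `φ` is encoded by its coaction `θ b = φ (b ⊗ 1)`, and `B₀` is the subalgebra
of `θ`-invariants. The cocycle condition at `b ⊗ 1 ⊗ 1` makes `θ` coassociative; applying the
multiplication `A ⊗ B → B` to the last two factors and using that `φ` is onto then shows that
`θ` is counital. Since `A` is flat over `k`, `A ⊗ B₀` is the subalgebra of invariants of
`A ⊗ B`; it contains `θ B` by coassociativity, and `θ` corestricted to it is inverse to the
multiplication map `A ⊗ B₀ → B`.
-/

open TensorProduct
open Algebra.TensorProduct (productMap includeLeft includeRight)

section Coaction

variable {k A B : Type*} [CommRing k] [CommRing A] [Algebra k A] [CommRing B] [Algebra k B]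

def descentCoaction (φ : B ⊗[k] A ≃ₐ[k] A ⊗[k] B) : B →ₐ[k] A ⊗[k] B :=
  (φ : B ⊗[k] A →ₐ[k] A ⊗[k] B).comp includeLeft

@[simp]
theorem descentCoaction_apply (φ : B ⊗[k] A ≃ₐ[k] A ⊗[k] B) (b : B) :
    descentCoaction φ b = φ (b ⊗ₜ[k] 1) :=
  rfl

theorem descentCoaction_coassoc (φ : B ⊗[k] A ≃ₐ[k] A ⊗[k] B)
    (φ13 : ((B ⊗[k] A) ⊗[k] A) →ₐ[k] (A ⊗[k] (A ⊗[k] B)))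
    (hφ13 : ∀ (b : B) (a a' : A),
      φ13 ((b ⊗ₜ[k] a) ⊗ₜ[k] a') =
        ((1 : A) ⊗ₜ[k] (a ⊗ₜ[k] (1 : B))) *
          (Algebra.TensorProduct.map (AlgHom.id k A) (includeRight : B →ₐ[k] A ⊗[k] B))
            (φ (b ⊗ₜ[k] a')))
    (h3 : ∀ x : (B ⊗[k] A) ⊗[k] A,
      φ13 x =
        (Algebra.TensorProduct.map (AlgHom.id k A) φ.toAlgHom)
          ((Algebra.TensorProduct.assoc k k k A B A)
            ((Algebra.TensorProduct.map φ.toAlgHom (AlgHom.id k A)) x))) :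
    (Algebra.TensorProduct.map (AlgHom.id k A) (descentCoaction φ)).comp (descentCoaction φ) =
      (Algebra.TensorProduct.map (AlgHom.id k A) includeRight).comp (descentCoaction φ) := by
  have h_assoc_tmul_one (x : A ⊗[k] B) :
      Algebra.TensorProduct.map (AlgHom.id k A) φ.toAlgHom
          (Algebra.TensorProduct.assoc k k k A B A (x ⊗ₜ 1)) =
        Algebra.TensorProduct.map (AlgHom.id k A) (descentCoaction φ) x := by
    induction x using TensorProduct.induction_on with
    | zero => simp
    | tmul a b => simp
    | add x y hx hy => rw [add_tmul, map_add, map_add, hx, hy, map_add]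
  ext b
  have h := h3 ((b ⊗ₜ 1) ⊗ₜ 1)
  rw [hφ13, ← Algebra.TensorProduct.one_def, ← Algebra.TensorProduct.one_def, one_mul,
    Algebra.TensorProduct.map_tmul] at h
  simpa [h_assoc_tmul_one] using h.symm

end Coaction

section Descent

variable {k A B : Type*} [CommRing k] [CommRing A] [Algebra k A]
  [CommRing B] [Algebra k B] [Algebra A B]

theorem apply_tmul_eq_descentCoaction_mul (φ : B ⊗[k] A ≃ₐ[k] A ⊗[k] B)
    (h1 : ∀ a a' : A, φ (algebraMap A B a ⊗ₜ[k] a') = a ⊗ₜ[k] algebraMap A B a')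
    (b : B) (a : A) :
    φ (b ⊗ₜ[k] a) = descentCoaction φ b * ((1 : A) ⊗ₜ[k] algebraMap A B a) := by
  have h1a : φ ((1 : B) ⊗ₜ[k] a) = (1 : A) ⊗ₜ[k] algebraMap A B a := by simpa using h1 1 a
  rw [descentCoaction_apply, ← h1a, ← map_mul, Algebra.TensorProduct.tmul_mul_tmul, mul_one,
    one_mul]

variable [IsScalarTower k A B]

theorem descentCoaction_comp_toAlgHom (φ : B ⊗[k] A ≃ₐ[k] A ⊗[k] B)
    (h1 : ∀ a a' : A, φ (algebraMap A B a ⊗ₜ[k] a') = a ⊗ₜ[k] algebraMap A B a') :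
    (descentCoaction φ).comp (IsScalarTower.toAlgHom k A B) = includeLeft :=
  AlgHom.ext fun a => by simpa using h1 a 1

theorem productMap_comp_descentCoaction (φ : B ⊗[k] A ≃ₐ[k] A ⊗[k] B)
    (h1 : ∀ a a' : A, φ (algebraMap A B a ⊗ₜ[k] a') = a ⊗ₜ[k] algebraMap A B a')
    (hcoassoc : (Algebra.TensorProduct.map (AlgHom.id k A) (descentCoaction φ)).comp
        (descentCoaction φ) =
      (Algebra.TensorProduct.map (AlgHom.id k A) includeRight).comp (descentCoaction φ)) :
    (productMap (IsScalarTower.toAlgHom k A B) (AlgHom.id k B)).comp (descentCoaction φ) =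
      AlgHom.id k B := by
  set q := productMap (IsScalarTower.toAlgHom k A B) (AlgHom.id k B)
  set R := Algebra.TensorProduct.map (AlgHom.id k A) (q.comp (descentCoaction φ))
  have hR_comp : R.comp (descentCoaction φ) = descentCoaction φ := by
    have h := congrArg (Algebra.TensorProduct.map (AlgHom.id k A) q).comp hcoassoc
    rwa [← AlgHom.comp_assoc, ← AlgHom.comp_assoc, ← Algebra.TensorProduct.map_id_comp,
      ← Algebra.TensorProduct.map_id_comp, Algebra.TensorProduct.productMap_right,
      Algebra.TensorProduct.map_id, AlgHom.id_comp] at h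
  have hR_one_tmul (a : A) : R (1 ⊗ₜ algebraMap A B a) = 1 ⊗ₜ algebraMap A B a := by
    simp [R, q, h1 a 1]
  have hR_apply (x : B ⊗[k] A) : R (φ x) = φ x := by
    induction x using TensorProduct.induction_on with
    | zero => simp
    | tmul b a =>
      rw [apply_tmul_eq_descentCoaction_mul φ h1, map_mul, ← AlgHom.comp_apply R, hR_comp, hR_one_tmul]
    | add x y hx hy => rw [map_add, map_add, hx, hy]
  ext b
  simpa [R, q] using congrArg q (hR_apply (φ.symm (1 ⊗ₜ b)))

theorem bijective_productMap_equalizer_includeRight [Module.Flat k A]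
    (θ : B →ₐ[k] A ⊗[k] B)
    (hθ_toAlgHom : θ.comp (IsScalarTower.toAlgHom k A B) = includeLeft)
    (hθ_counit : (productMap (IsScalarTower.toAlgHom k A B) (AlgHom.id k B)).comp θ =
      AlgHom.id k B)
    (hθ_coassoc : (Algebra.TensorProduct.map (AlgHom.id k A) θ).comp θ =
      (Algebra.TensorProduct.map (AlgHom.id k A) includeRight).comp θ) :
    Function.Bijective
      (productMap (IsScalarTower.toAlgHom k A B) (AlgHom.equalizer θ includeRight).val) := by
  set S := AlgHom.equalizer θ includeRight
  set e := AlgHom.tensorEqualizerEquiv k A θ (includeRight : B →ₐ[k] A ⊗[k] B)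
  have h_map_val (x : A ⊗[k] S) : Algebra.TensorProduct.map (AlgHom.id k A) S.val x = e x :=
    (AlgHom.coe_tensorEqualizer k A θ includeRight x).symm
  have hθ_comp : θ.comp (productMap (IsScalarTower.toAlgHom k A B) S.val) =
      Algebra.TensorProduct.map (AlgHom.id k A) S.val := by
    refine Algebra.TensorProduct.ext' fun a s => ?_
    have hs : θ s = 1 ⊗ₜ (s : B) := s.2
    have ha : θ (algebraMap A B a) = a ⊗ₜ 1 := AlgHom.congr_fun hθ_toAlgHom a
    simp [ha, hs]
  have h_productMap : (productMap (IsScalarTower.toAlgHom k A B) (AlgHom.id k B)).comp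
      (Algebra.TensorProduct.map (AlgHom.id k A) S.val) =
        productMap (IsScalarTower.toAlgHom k A B) S.val :=
    Algebra.TensorProduct.ext' fun _ _ => rfl
  constructor
  · intro x y hxy
    apply e.injective
    apply Subtype.ext
    rw [← h_map_val, ← h_map_val, ← hθ_comp, AlgHom.comp_apply, AlgHom.comp_apply, hxy]
  · intro b
    obtain ⟨z, hz⟩ := e.surjective ⟨θ b, AlgHom.congr_fun hθ_coassoc b⟩
    refine ⟨z, ?_⟩
    rw [← h_productMap, AlgHom.comp_apply, h_map_val, hz]
    exact AlgHom.congr_fun hθ_counit b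

end Descent

theorem faithfully_flat_descent_difference_algebras_general
    (k A B : Type*) [CommRing k]
    [CommRing A] [Algebra k A] [Module.FaithfullyFlat k A]
    [CommRing B] [Algebra k B] [Algebra A B] [IsScalarTower k A B]
    (σA : A →+* A) (σB : B →+* B)
    (τBA : B ⊗[k] A →+* B ⊗[k] A)
    (hτBA : ∀ (b : B) (a : A), τBA (b ⊗ₜ[k] a) = σB b ⊗ₜ[k] σA a)
    (τAB : A ⊗[k] B →+* A ⊗[k] B)
    (hτAB : ∀ (a : A) (b : B), τAB (a ⊗ₜ[k] b) = σA a ⊗ₜ[k] σB b)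
    (φ : (B ⊗[k] A) ≃ₐ[k] (A ⊗[k] B))
    (h1 : ∀ a a' : A, φ ((algebraMap A B a) ⊗ₜ[k] a') = a ⊗ₜ[k] (algebraMap A B a'))
    (h2 : ∀ x : B ⊗[k] A, φ (τBA x) = τAB (φ x))
    (φ13 : ((B ⊗[k] A) ⊗[k] A) →ₐ[k] (A ⊗[k] (A ⊗[k] B)))
    (hφ13 : ∀ (b : B) (a a' : A),
      φ13 ((b ⊗ₜ[k] a) ⊗ₜ[k] a') =
        ((1 : A) ⊗ₜ[k] (a ⊗ₜ[k] (1 : B))) *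
          (Algebra.TensorProduct.map (AlgHom.id k A)
            (Algebra.TensorProduct.includeRight : B →ₐ[k] A ⊗[k] B))
            (φ (b ⊗ₜ[k] a')))
    (h3 : ∀ x : (B ⊗[k] A) ⊗[k] A,
      φ13 x =
        (Algebra.TensorProduct.map (AlgHom.id k A) φ.toAlgHom)
          ((Algebra.TensorProduct.assoc k k k A B A)
            ((Algebra.TensorProduct.map φ.toAlgHom (AlgHom.id k A)) x))) :
    ∃ S : Subalgebra k B,
      (S : Set B) = {b : B | φ (b ⊗ₜ[k] (1 : A)) = (1 : A) ⊗ₜ[k] b} ∧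
      (∀ b ∈ S, σB b ∈ S) ∧
      Function.Bijective
        (Algebra.TensorProduct.productMap (IsScalarTower.toAlgHom k A B) S.val) := by
  have hcoassoc := descentCoaction_coassoc φ φ13 hφ13 h3
  refine ⟨AlgHom.equalizer (descentCoaction φ) includeRight, rfl, ?_, ?_⟩
  · intro b (hb : φ (b ⊗ₜ 1) = 1 ⊗ₜ b)
    show φ (σB b ⊗ₜ 1) = 1 ⊗ₜ σB b
    rw [← map_one σA, ← hτBA, h2, hb, hτAB]
  · exact bijective_productMap_equalizer_includeRight _ (descentCoaction_comp_toAlgHom φ h1)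
      (productMap_comp_descentCoaction φ h1 hcoassoc) hcoassoc

/-- Faithfully flat descent for difference algebras: a descent datum `φ` on an
`A`-σ-algebra `B` descends it to the `k`-σ-algebra
`B₀ = {b ∈ B | φ(b ⊗ 1) = 1 ⊗ b}`, i.e. `B₀` is a `k`-subalgebra of `B` stable
under `σ` and the multiplication map `A ⊗[k] B₀ → B` is bijective. -/
theorem faithfully_flat_descent_difference_algebras
    (k A B : Type*) [CommRing k]
    [CommRing A] [Algebra k A] [Module.FaithfullyFlat k A]
    [CommRing B] [Algebra k B] [Algebra A B] [IsScalarTower k A B]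
    (σk : k →+* k) (σA : A →+* A) (σB : B →+* B)
    (hσA : ∀ c : k, σA (algebraMap k A c) = algebraMap k A (σk c))
    (hσB : ∀ a : A, σB (algebraMap A B a) = algebraMap A B (σA a))
    (τBA : B ⊗[k] A →+* B ⊗[k] A)
    (hτBA : ∀ (b : B) (a : A), τBA (b ⊗ₜ[k] a) = σB b ⊗ₜ[k] σA a)
    (τAB : A ⊗[k] B →+* A ⊗[k] B)
    (hτAB : ∀ (a : A) (b : B), τAB (a ⊗ₜ[k] b) = σA a ⊗ₜ[k] σB b)
    (φ : (B ⊗[k] A) ≃ₐ[k] (A ⊗[k] B))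
    (h1 : ∀ a a' : A, φ ((algebraMap A B a) ⊗ₜ[k] a') = a ⊗ₜ[k] (algebraMap A B a'))
    (h2 : ∀ x : B ⊗[k] A, φ (τBA x) = τAB (φ x))
    (φ13 : ((B ⊗[k] A) ⊗[k] A) →ₐ[k] (A ⊗[k] (A ⊗[k] B)))
    (hφ13 : ∀ (b : B) (a a' : A),
      φ13 ((b ⊗ₜ[k] a) ⊗ₜ[k] a') =
        ((1 : A) ⊗ₜ[k] (a ⊗ₜ[k] (1 : B))) *
          (Algebra.TensorProduct.map (AlgHom.id k A)
            (Algebra.TensorProduct.includeRight : B →ₐ[k] A ⊗[k] B))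
            (φ (b ⊗ₜ[k] a')))
    (h3 : ∀ x : (B ⊗[k] A) ⊗[k] A,
      φ13 x =
        (Algebra.TensorProduct.map (AlgHom.id k A) φ.toAlgHom)
          ((Algebra.TensorProduct.assoc k k k A B A)
            ((Algebra.TensorProduct.map φ.toAlgHom (AlgHom.id k A)) x))) :
    ∃ S : Subalgebra k B,
      (S : Set B) = {b : B | φ (b ⊗ₜ[k] (1 : A)) = (1 : A) ⊗ₜ[k] b} ∧
      (∀ b ∈ S, σB b ∈ S) ∧
      Function.Bijective
        (Algebra.TensorProduct.productMap (IsScalarTower.toAlgHom k A B) S.val) :=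
  faithfully_flat_descent_difference_algebras_general k A B σA σB τBA hτBA τAB hτAB φ h1 h2 φ13 hφ13
    h3
end
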